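/- arXiv:2402.18014 — 4 statements merged into one kernel-verified Lean document; each statement's English description precedes it below -/
import Mathlib

section
/- For a set-valued risk measure R : L^p_d → F_M, the following are equivalent: (i) R is star-shaped (tR(X) ⊆ R(tX) for t ∈ (0,1)); (ii) R(tX) ⊆ tR(X) for all t ∈ (1,∞); (iii) for each X, the map β ↦ R(βX)/β is shrinking on (0,∞), i.e. β₁ > β₂ > 0 implies R(β₁X)/β₁ ⊆ R(β₂X)/β₂. -/
open scoped Pointwise
open Filter Topology Set

namespace SVRM

variable {d : ℕ} {V : Type} [AddCommGroup V] [Module ℝ V]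

/-- The interior of `K ∩ M` relative to the subspace `M`. -/
def MInt (K : Set (Fin d → ℝ)) (M : Submodule ℝ (Fin d → ℝ)) : Set (Fin d → ℝ) :=
  Subtype.val '' (interior {x : M | (x : Fin d → ℝ) ∈ K})

/-- The collection `F_M` of upper closed subsets of `M`. -/
def FM (K : Set (Fin d → ℝ)) (M : Submodule ℝ (Fin d → ℝ)) : Set (Set (Fin d → ℝ)) :=
  {D | D ⊆ (M : Set (Fin d → ℝ)) ∧ D = closure (D + (K ∩ (M : Set (Fin d → ℝ))))}

/-- The market model: solvency cone `K ⊇ ℝ^d_+`, eligible subspace `M` with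
`int(K ∩ M) ≠ ∅` (interior taken in `M`), the embedding `const` of deterministic
portfolios `ℝ^d` into `L^p_d`, and the cone `L^p_d(K)` of a.s. solvent positions. -/
structure Market (d : ℕ) (V : Type) [AddCommGroup V] [Module ℝ V] where
  K : Set (Fin d → ℝ)
  M : Submodule ℝ (Fin d → ℝ)
  const : (Fin d → ℝ) →ₗ[ℝ] V
  LpK : Set V
  K_closed : IsClosed K
  K_convex : Convex ℝ K
  K_cone : ∀ t : ℝ, 0 ≤ t → ∀ x ∈ K, t • x ∈ K
  K_orthant : ∀ x : Fin d → ℝ, (∀ i, 0 ≤ x i) → x ∈ K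
  intKM_ne : (MInt K M).Nonempty
  LpK_zero : (0 : V) ∈ LpK
  LpK_add : ∀ X ∈ LpK, ∀ Y ∈ LpK, X + Y ∈ LpK
  LpK_smul : ∀ t : ℝ, 0 ≤ t → ∀ X ∈ LpK, t • X ∈ LpK
  LpK_dclosed : ∀ (X : V) (u : ℕ → Fin d → ℝ), Tendsto u atTop (𝓝 0) →
    (∀ k, X + const (u k) ∈ LpK) → X ∈ LpK
  const_mem : ∀ x ∈ K, const x ∈ LpK

variable (S : Market d V)

/-- (R1) Cash additivity: `R(X + u) = R(X) - u` for `u ∈ M`. -/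
def CashAdditive (R : V → Set (Fin d → ℝ)) : Prop :=
  ∀ (X : V), ∀ u ∈ S.M, R (X + S.const u) = (fun v => v - u) '' R X

/-- (R2) `L^p_d(K)`-monotonicity. -/
def MonotoneRM (R : V → Set (Fin d → ℝ)) : Prop :=
  ∀ X Y : V, X - Y ∈ S.LpK → R Y ⊆ R X

/-- A set-valued risk measure: maps into `F_M` and satisfies (R1), (R2). -/
def IsRiskMeasure (R : V → Set (Fin d → ℝ)) : Prop :=
  (∀ X, R X ∈ FM S.K S.M) ∧ CashAdditive S R ∧ MonotoneRM S R

/-- (R6) Star-shapedness: `t R(X) ⊆ R(tX)` for `t ∈ (0,1)`. -/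
def StarShaped (R : V → Set (Fin d → ℝ)) : Prop :=
  ∀ (X : V), ∀ t ∈ Set.Ioo (0:ℝ) 1, t • R X ⊆ R (t • X)

/-- (R4) Convexity. -/
def ConvexRM (R : V → Set (Fin d → ℝ)) : Prop :=
  ∀ (X Y : V), ∀ t ∈ Set.Ioo (0:ℝ) 1,
    t • R X + (1 - t) • R Y ⊆ R (t • X + (1 - t) • Y)

/-- (R5) Positive homogeneity. -/
def PosHom (R : V → Set (Fin d → ℝ)) : Prop :=
  ∀ (X : V), ∀ t : ℝ, 0 < t → t • R X = R (t • X)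

/-- (R3) Normalization: `K ∩ M ⊆ R(0)` and `R(0) ∩ (-int(K ∩ M)) = ∅`. -/
def NormalizedRM (R : V → Set (Fin d → ℝ)) : Prop :=
  S.K ∩ (S.M : Set (Fin d → ℝ)) ⊆ R 0 ∧ R 0 ∩ (-(MInt S.K S.M)) = ∅

/-- Subadditivity: `R(X) + R(Y) ⊆ R(X + Y)`. -/
def Subadditive (R : V → Set (Fin d → ℝ)) : Prop :=
  ∀ X Y : V, R X + R Y ⊆ R (X + Y)

/-- (A1) directional closedness in `M`, together with `A + (K ∩ M) ⊆ A`. -/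
def DirClosed (A : Set V) : Prop :=
  (∀ (X : V) (u : ℕ → Fin d → ℝ), (∀ k, u k ∈ S.M) → Tendsto u atTop (𝓝 0) →
    (∀ k, X + S.const (u k) ∈ A) → X ∈ A) ∧
  (∀ u ∈ S.K ∩ (S.M : Set (Fin d → ℝ)), ∀ X ∈ A, X + S.const u ∈ A)

/-- (A2) monotonicity: `A + L^p_d(K) ⊆ A`. -/
def MonotoneAcc (A : Set V) : Prop := ∀ X ∈ A, ∀ Y ∈ S.LpK, X + Y ∈ A

/-- An acceptance set: (A1) and (A2). -/
def IsAcceptanceSet (A : Set V) : Prop := DirClosed S A ∧ MonotoneAcc S A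

/-- (A6) Star-shapedness (at `0`) of a set. -/
def StarShapedSet (A : Set V) : Prop := ∀ X ∈ A, ∀ t ∈ Set.Icc (0:ℝ) 1, t • X ∈ A

/-- (A5) Cone property. -/
def ConeSet (A : Set V) : Prop := ∀ X ∈ A, ∀ t : ℝ, 0 ≤ t → t • X ∈ A

/-- (A3) Normalization of an acceptance set. -/
def NormalizedAcc (A : Set V) : Prop :=
  (∀ u ∈ S.K ∩ (S.M : Set (Fin d → ℝ)), S.const u ∈ A) ∧
  (∀ u ∈ MInt S.K S.M, S.const (-u) ∉ A)

/-- The acceptance set `A_R = {X : 0 ∈ R(X)}` of a risk measure `R`. -/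
def acc (R : V → Set (Fin d → ℝ)) : Set V := {X | (0 : Fin d → ℝ) ∈ R X}

/-- The risk measure `R_A(X) = {u ∈ M : X + u ∈ A}` induced by a set `A`. -/
def rm (A : Set V) : V → Set (Fin d → ℝ) :=
  fun X => {u | u ∈ S.M ∧ X + S.const u ∈ A}

/-- equivalent characterizations of star-shapedness of a set-valued risk
measure: (i) `tR(X) ⊆ R(tX)` for `t ∈ (0,1)`; (ii) `R(tX) ⊆ tR(X)` for `t > 1`;
(iii) the risk-to-exposure ratio `β ↦ R(βX)/β` is shrinking on `(0,∞)`. -/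
theorem starShaped_tfae (S : Market d V) (R : V → Set (Fin d → ℝ))
    (hR : IsRiskMeasure S R) :
    (StarShaped R ↔ ∀ (X : V), ∀ t : ℝ, 1 < t → R (t • X) ⊆ t • R X) ∧
    ((∀ (X : V), ∀ t : ℝ, 1 < t → R (t • X) ⊆ t • R X) ↔
      ∀ (X : V) (β₁ β₂ : ℝ), 0 < β₂ → β₂ < β₁ →
        β₁⁻¹ • R (β₁ • X) ⊆ β₂⁻¹ • R (β₂ • X)) := by
  constructor
  · constructor
    · intro h X t ht v hv
      have h1 : (t⁻¹ : ℝ) • R (t • X) ⊆ R (t⁻¹ • t • X) :=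
        h (t • X) t⁻¹ ⟨inv_pos.mpr (lt_trans one_pos ht), inv_lt_one_of_one_lt₀ ht⟩
      have ht0 : (t : ℝ) ≠ 0 := ne_of_gt (lt_trans one_pos ht)
      refine ⟨t⁻¹ • v, ?_, by simp [smul_smul, mul_inv_cancel₀ ht0]⟩
      have := h1 ⟨v, hv, rfl⟩
      rwa [inv_smul_smul₀ ht0] at this
    · intro h X t ht v hv
      obtain ⟨w, hw, rfl⟩ := hv
      have ht0 : (t : ℝ) ≠ 0 := ne_of_gt ht.1
      have h1 : R (t⁻¹ • t • X) ⊆ t⁻¹ • R (t • X) :=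
        h (t • X) t⁻¹ (by rw [one_lt_inv_iff₀]; exact ⟨ht.1, ht.2⟩)
      rw [inv_smul_smul₀ ht0] at h1
      obtain ⟨z, hz, hzw⟩ := h1 hw
      show t • w ∈ R (t • X)
      have : t • w = z := by rw [← hzw]; show t • t⁻¹ • z = z
                             rw [smul_smul, mul_inv_cancel₀ ht0, one_smul]
      rwa [this]
  · constructor
    · intro h X β₁ β₂ hβ₂ hlt v hv
      obtain ⟨w, hw, rfl⟩ := hv
      have hβ₁ : (0:ℝ) < β₁ := lt_trans hβ₂ hlt
      have ht : 1 < β₁ / β₂ := (one_lt_div hβ₂).mpr hlt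
      have h1 : R ((β₁ / β₂) • β₂ • X) ⊆ (β₁ / β₂) • R (β₂ • X) := h (β₂ • X) _ ht
      rw [smul_smul, div_mul_cancel₀ _ (ne_of_gt hβ₂)] at h1
      obtain ⟨z, hz, hzw⟩ := h1 hw
      refine ⟨z, hz, ?_⟩
      rw [← hzw]
      show β₂⁻¹ • z = β₁⁻¹ • (β₁ / β₂) • z
      rw [smul_smul]
      congr 1
      field_simp
    · intro h X t ht v hv
      have h1 : (t:ℝ)⁻¹ • R (t • X) ⊆ (1:ℝ)⁻¹ • R ((1:ℝ) • X) := h X t 1 one_pos ht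
      have ht0 : (t:ℝ) ≠ 0 := ne_of_gt (lt_trans one_pos ht)
      have := h1 ⟨v, hv, rfl⟩
      simp only [inv_one, one_smul] at this
      exact ⟨t⁻¹ • v, this, by
        show t • t⁻¹ • v = v
        rw [smul_smul, mul_inv_cancel₀ ht0, one_smul]⟩

end SVRM
end

section
/- Let R : L^p_d → F_M be a normalized subadditive set-valued risk measure, i.e. R(X)+R(Y) ⊆ R(X+Y) for all X,Y. Then the following are equivalent: (i) R is star-shaped; (ii) R is positively homogeneous; (iii) R is convex. -/
open scoped Pointwise
open Filter Topology Set

namespace SVRM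

variable {d : ℕ} {V : Type} [AddCommGroup V] [Module ℝ V]

variable (S : Market d V)

/-- for a normalized subadditive set-valued risk measure,
star-shapedness, positive homogeneity, and convexity are equivalent. -/
theorem subadditive_starShaped_iff_posHom_iff_convex (S : Market d V)
    (R : V → Set (Fin d → ℝ)) (hR : IsRiskMeasure S R) (hN : NormalizedRM S R)
    (hsub : Subadditive R) :
    (StarShaped R ↔ PosHom R) ∧ (PosHom R ↔ ConvexRM R) := by
  -- integer scaling from subadditivity
  have hnat : ∀ n : ℕ, 1 ≤ n → ∀ (X : V) (x : Fin d → ℝ), x ∈ R X →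
      (n : ℝ) • x ∈ R ((n : ℝ) • X) := by
    intro n hn
    induction n with
    | zero => omega
    | succ m ih =>
      intro X x hx
      rcases Nat.eq_or_lt_of_le hn with h1 | h1
      · simp only [← h1]
        simpa using hx
      · have hm : 1 ≤ m := by omega
        have h1 : ((m + 1 : ℕ) : ℝ) • x = (m : ℝ) • x + x := by
          push_cast; rw [add_smul, one_smul]
        have h2 : ((m + 1 : ℕ) : ℝ) • X = (m : ℝ) • X + X := by
          push_cast; rw [add_smul, one_smul]
        rw [h1, h2]
        exact hsub _ _ (Set.add_mem_add (ih hm X x hx) hx)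
  -- star-shaped ⇒ scaling inclusion for all t > 0
  have hscale : StarShaped R → ∀ t : ℝ, 0 < t → ∀ X : V, t • R X ⊆ R (t • X) := by
    intro hS t ht X
    rintro _ ⟨x, hx, rfl⟩
    set n := ⌈t⌉₊ with hn
    have hn1 : 1 ≤ n := Nat.one_le_ceil_iff.mpr ht
    have hnpos : (0 : ℝ) < (n : ℝ) := by exact_mod_cast hn1
    have hle : t ≤ (n : ℝ) := Nat.le_ceil t
    have hmem : (n : ℝ) • x ∈ R ((n : ℝ) • X) := hnat n hn1 X x hx
    rcases eq_or_lt_of_le hle with heq | hlt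
    · rw [heq]; exact hmem
    · have hio : t / n ∈ Set.Ioo (0 : ℝ) 1 := by
        constructor
        · positivity
        · rw [div_lt_one hnpos]; exact hlt
      have := hS ((n : ℝ) • X) (t / n) hio
        (Set.smul_mem_smul_set (a := t / n) hmem)
      rw [smul_smul, smul_smul, div_mul_cancel₀ t (ne_of_gt hnpos)] at this
      exact this
  have hSP : StarShaped R → PosHom R := by
    intro hS X t ht
    apply Set.Subset.antisymm (hscale hS t ht X)
    intro u hu
    have h1 : (1 / t) • u ∈ R ((1 / t) • (t • X)) :=
      hscale hS (1 / t) (by positivity) (t • X) (Set.smul_mem_smul_set hu)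
    have h2 : (1 / t) • (t • X) = X := by
      rw [smul_smul, one_div_mul_cancel (ne_of_gt ht), one_smul]
    rw [h2] at h1
    have : t • ((1 / t) • u) ∈ t • R X := Set.smul_mem_smul_set h1
    rwa [smul_smul, mul_one_div_cancel (ne_of_gt ht), one_smul] at this
  have hPS : PosHom R → StarShaped R := by
    intro hP X t ht
    rw [hP X t ht.1]
  have hPC : PosHom R → ConvexRM R := by
    intro hP X Y t ht
    rw [hP X t ht.1, hP Y (1 - t) (by linarith [ht.2])]
    exact hsub _ _
  have hCS : ConvexRM R → StarShaped R := by
    intro hC X t ht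
    have h0 : (0 : Fin d → ℝ) ∈ R 0 :=
      hN.1 ⟨S.K_orthant 0 (fun i => le_rfl), Submodule.zero_mem _⟩
    rintro _ ⟨x, hx, rfl⟩
    have := hC X 0 t ht
      (Set.add_mem_add (Set.smul_mem_smul_set hx) (Set.smul_mem_smul_set h0))
    simpa using this
  exact ⟨⟨hSP, hPS⟩, ⟨hPC, fun hC => hSP (hCS hC)⟩⟩

end SVRM
end

section
/- A mapping R : L^p_d → F_M is a set-valued risk measure (cash additive and monotone) if and only if there exists a family {R_λ : λ ∈ Λ} of set-valued convex risk measures such that R(X) = ∪_{λ∈Λ} R_λ(X) for all X ∈ L^p_d. -/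
open scoped Pointwise
open Filter Topology Set

namespace SVRM

variable {d : ℕ} {V : Type} [AddCommGroup V] [Module ℝ V]

variable (S : Market d V)

/-- Auxiliary: the convex risk measure attached to an acceptable position `Z`. -/
def RZ (S : Market d V) (Z : V) : V → Set (Fin d → ℝ) :=
  fun X => {u | u ∈ S.M ∧ X + S.const u - Z ∈ S.LpK}

lemma RZ_closed (S : Market d V) (Z X : V) : IsClosed (RZ S Z X) := by
  apply isClosed_of_closure_subset
  intro v hv
  obtain ⟨w, hwmem, hwlim⟩ := mem_closure_iff_seq_limit.mp hv
  have hMc : IsClosed (S.M : Set (Fin d → ℝ)) := Submodule.closed_of_finiteDimensional S.M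
  refine ⟨hMc.mem_of_tendsto hwlim (Filter.Eventually.of_forall fun k => (hwmem k).1), ?_⟩
  apply S.LpK_dclosed (X + S.const v - Z) (fun k => w k - v)
  · simpa using hwlim.sub_const v
  · intro k
    have h : X + S.const v - Z + S.const (w k - v) = X + S.const (w k) - Z := by
      rw [map_sub]; abel
    rw [h]; exact (hwmem k).2

lemma RZ_risk (S : Market d V) (Z : V) :
    IsRiskMeasure S (RZ S Z) ∧ ConvexRM (RZ S Z) := by
  have hsub : ∀ X, RZ S Z X + (S.K ∩ (S.M : Set (Fin d → ℝ))) ⊆ RZ S Z X := by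
    rintro X _ ⟨u, hu, w, hw, rfl⟩
    refine ⟨S.M.add_mem hu.1 hw.2, ?_⟩
    have h : X + S.const (u + w) - Z = (X + S.const u - Z) + S.const w := by
      rw [map_add]; abel
    rw [h]; exact S.LpK_add _ hu.2 _ (S.const_mem w hw.1)
  refine ⟨⟨?_, ?_, ?_⟩, ?_⟩
  · -- values in FM
    intro X
    refine ⟨fun u hu => hu.1, Set.Subset.antisymm ?_ ?_⟩
    · intro u hu
      exact subset_closure ⟨u, hu, 0, ⟨S.K_orthant 0 fun i => le_rfl, S.M.zero_mem⟩, by simp⟩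
    · exact closure_minimal (hsub X) (RZ_closed S Z X)
  · -- cash additive
    intro X u huM
    ext v
    constructor
    · rintro ⟨hvM, hv⟩
      refine ⟨v + u, ⟨S.M.add_mem hvM huM, ?_⟩, add_sub_cancel_right v u⟩
      have h : X + S.const (v + u) - Z = X + S.const u + S.const v - Z := by
        rw [map_add]; abel
      rw [h]; exact hv
    · rintro ⟨w, ⟨hwM, hw⟩, rfl⟩
      refine ⟨S.M.sub_mem hwM huM, ?_⟩
      have h : X + S.const u + S.const (w - u) - Z = X + S.const w - Z := by
        rw [map_sub]; abel
      rw [h]; exact hw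
  · -- monotone
    intro X Y h u hu
    refine ⟨hu.1, ?_⟩
    have he : X + S.const u - Z = (Y + S.const u - Z) + (X - Y) := by abel
    rw [he]; exact S.LpK_add _ hu.2 _ h
  · -- convex
    rintro X Y t ht _ ⟨_, ⟨p, hp, rfl⟩, _, ⟨q, hq, rfl⟩, rfl⟩
    refine ⟨S.M.add_mem (S.M.smul_mem t hp.1) (S.M.smul_mem _ hq.1), ?_⟩
    have key : t • X + (1 - t) • Y + S.const (t • p + (1 - t) • q) - Z
        = t • (X + S.const p - Z) + (1 - t) • (Y + S.const q - Z) := by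
      rw [map_add, map_smul, map_smul]
      match_scalars <;> ring
    rw [key]
    exact S.LpK_add _ (S.LpK_smul t ht.1.le _ hp.2) _
      (S.LpK_smul _ (by linarith [ht.2]) _ hq.2)

/-- a mapping `R : L^p_d → F_M` is a set-valued risk measure iff it is
the union of a family of set-valued convex risk measures. -/
theorem riskMeasure_iff_union_convex (S : Market d V) (R : V → Set (Fin d → ℝ))
    (hF : ∀ X, R X ∈ FM S.K S.M) :
    IsRiskMeasure S R ↔
      ∃ (Λ : Type) (Rl : Λ → V → Set (Fin d → ℝ)),
        (∀ l, IsRiskMeasure S (Rl l) ∧ ConvexRM (Rl l)) ∧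
        ∀ X : V, R X = ⋃ l, Rl l X := by
  constructor
  · rintro ⟨hFm, hCA, hMon⟩
    refine ⟨{Z : V // (0 : Fin d → ℝ) ∈ R Z}, fun Z => RZ S Z.1, fun Z => RZ_risk S Z.1, ?_⟩
    intro X
    ext u
    simp only [Set.mem_iUnion]
    constructor
    · intro hu
      have huM : u ∈ S.M := (hFm X).1 hu
      refine ⟨⟨X + S.const u, ?_⟩, huM, by simpa using S.LpK_zero⟩
      rw [hCA X u huM]
      exact ⟨u, hu, sub_self u⟩
    · rintro ⟨⟨Z, hZ⟩, huM, hu⟩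
      have h0 : (0 : Fin d → ℝ) ∈ R (X + S.const u) := hMon _ _ hu hZ
      rw [hCA X u huM] at h0
      obtain ⟨w, hw, hwu⟩ := h0
      rwa [← sub_eq_zero.mp hwu]
  · rintro ⟨Λ, Rl, hRl, hU⟩
    refine ⟨hF, ?_, ?_⟩
    · intro X u huM
      rw [hU, hU, Set.image_iUnion]
      exact Set.iUnion_congr fun l => (hRl l).1.2.1 X u huM
    · intro X Y hXY
      rw [hU, hU]
      exact Set.iUnion_mono fun l => (hRl l).1.2.2 X Y hXY

end SVRM
end

section
/- If R : L^p_d → F_M is a set-valued risk measure, then for all X ∈ L^p_d, R(X) = ∪ { R_ξ(X) : R_ξ is a set-valued convex risk measure with R_ξ(Y) ⊆ R(Y) for all Y }. -/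
open scoped Pointwise
open Filter Topology Set

namespace SVRM

variable {d : ℕ} {V : Type} [AddCommGroup V] [Module ℝ V]

variable (S : Market d V)

/-- a set-valued risk measure is the union of all set-valued convex
risk measures it dominates. -/
theorem riskMeasure_eq_union_dominated_convex (S : Market d V)
    (R : V → Set (Fin d → ℝ)) (hR : IsRiskMeasure S R) :
    ∀ X : V, R X = {u | ∃ R' : V → Set (Fin d → ℝ),
      IsRiskMeasure S R' ∧ ConvexRM R' ∧ (∀ Y, R' Y ⊆ R Y) ∧ u ∈ R' X} := by
  obtain ⟨hFM, hCA, hMono⟩ := hR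
  intro X
  ext u
  simp only [Set.mem_setOf_eq]
  constructor
  · intro hu
    have huM : u ∈ S.M := (hFM X).1 hu
    set R' : V → Set (Fin d → ℝ) :=
      fun Y => {v | v ∈ S.M ∧ Y + S.const v - (X + S.const u) ∈ S.LpK} with hR'
    have hzeroKM : (0 : Fin d → ℝ) ∈ S.K ∩ (S.M : Set (Fin d → ℝ)) :=
      ⟨S.K_orthant 0 (fun i => le_rfl), S.M.zero_mem⟩
    refine ⟨R', ⟨?_, ?_, ?_⟩, ?_, ?_, ?_⟩
    · -- maps into F_M
      intro Y
      have hDK : R' Y + (S.K ∩ (S.M : Set (Fin d → ℝ))) = R' Y := by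
        apply subset_antisymm
        · rintro _ ⟨a, ha, b, hb, rfl⟩
          refine ⟨S.M.add_mem ha.1 hb.2, ?_⟩
          have hsum := S.LpK_add _ ha.2 _ (S.const_mem b hb.1)
          have heq : Y + S.const (a + b) - (X + S.const u)
              = (Y + S.const a - (X + S.const u)) + S.const b := by
            rw [map_add]; abel
          rwa [heq]
        · intro v hv
          exact ⟨v, hv, 0, hzeroKM, by simp⟩
      have hclosed : IsClosed (R' Y) := by
        refine isClosed_of_closure_subset ?_
        intro v hv
        obtain ⟨g, hg, hgl⟩ := mem_closure_iff_seq_limit.1 hv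
        have hvM : v ∈ S.M :=
          (Submodule.closed_of_finiteDimensional S.M).mem_of_tendsto hgl
            (Filter.Eventually.of_forall fun k => (hg k).1)
        refine ⟨hvM, ?_⟩
        refine S.LpK_dclosed _ (fun k => g k - v) (by simpa using hgl.sub_const v) ?_
        intro k
        have heq : Y + S.const v - (X + S.const u) + S.const (g k - v)
            = Y + S.const (g k) - (X + S.const u) := by
          rw [map_sub]; abel
        rw [heq]; exact (hg k).2
      exact ⟨fun v hv => hv.1, by rw [hDK, hclosed.closure_eq]⟩
    · -- cash additivity
      intro Y w hw
      ext v
      simp only [hR', Set.mem_setOf_eq, Set.mem_image]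
      constructor
      · rintro ⟨hvM, hvL⟩
        refine ⟨v + w, ⟨S.M.add_mem hvM hw, ?_⟩, by abel⟩
        have heq : Y + S.const (v + w) - (X + S.const u)
            = Y + S.const w + S.const v - (X + S.const u) := by
          rw [map_add]; abel
        rwa [heq]
      · rintro ⟨a, ⟨haM, haL⟩, rfl⟩
        refine ⟨S.M.sub_mem haM hw, ?_⟩
        have heq : Y + S.const w + S.const (a - w) - (X + S.const u)
            = Y + S.const a - (X + S.const u) := by
          rw [map_sub]; abel
        rwa [heq]
    · -- monotonicity
      intro Y1 Y2 hYY v hv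
      refine ⟨hv.1, ?_⟩
      have hsum := S.LpK_add _ hv.2 _ hYY
      have heq : Y2 + S.const v - (X + S.const u) + (Y1 - Y2)
          = Y1 + S.const v - (X + S.const u) := by abel
      rwa [heq] at hsum
    · -- convexity
      intro Y1 Y2 t ht
      rintro _ ⟨a, ⟨v1, hv1, rfl⟩, b, ⟨v2, hv2, rfl⟩, rfl⟩
      refine ⟨S.M.add_mem (S.M.smul_mem t hv1.1) (S.M.smul_mem (1 - t) hv2.1), ?_⟩
      have hsum := S.LpK_add _ (S.LpK_smul t ht.1.le _ hv1.2) _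
        (S.LpK_smul (1 - t) (by linarith [ht.2]) _ hv2.2)
      have heq : t • (Y1 + S.const v1 - (X + S.const u))
            + (1 - t) • (Y2 + S.const v2 - (X + S.const u))
          = t • Y1 + (1 - t) • Y2 + S.const (t • v1 + (1 - t) • v2)
            - (X + S.const u) := by
        rw [map_add, map_smul, map_smul]; module
      rwa [heq] at hsum
    · -- domination
      intro Y v hv
      have h1 : R (X + S.const u) ⊆ R (Y + S.const v) := hMono _ _ hv.2
      have h0 : (0 : Fin d → ℝ) ∈ R (X + S.const u) := by
        rw [hCA X u huM]
        exact ⟨u, hu, sub_self u⟩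
      have h2 := h1 h0
      rw [hCA Y v hv.1] at h2
      obtain ⟨w, hw, hwv⟩ := h2
      rwa [sub_eq_zero.1 hwv] at hw
    · -- u ∈ R' X
      refine ⟨huM, ?_⟩
      have heq : X + S.const u - (X + S.const u) = 0 := by abel
      rw [heq]; exact S.LpK_zero
  · rintro ⟨R', _, _, hdom, hu⟩
    exact hdom X hu

end SVRM
end
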